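/- Let R be a commutative strongly ℤ-graded ring with grading 𝒜. Then R is a flat module over the subring R_{≥0}, and also a flat module over the subring R_{≤0}. -/

import Mathlib

/-- A ℤ-graded ring is *strongly graded* if `𝒜 i * 𝒜 j = 𝒜 (i + j)` for all `i j`. -/
def IsStronglyGraded {R : Type*} [Ring R] (𝒜 : ℤ → Submodule ℤ R) : Prop :=
  ∀ i j : ℤ, 𝒜 i * 𝒜 j = 𝒜 (i + j)

variable {R : Type*} [CommRing R] (𝒜 : ℤ → Submodule ℤ R) [GradedRing 𝒜]

/-- `R_{≤k}`, the sum of the homogeneous components of degree at most `k`. -/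
def Rle (k : ℤ) : Submodule ℤ R := ⨆ n ≤ k, 𝒜 n

/-- `R_{≥k}`, the sum of the homogeneous components of degree at least `k`. -/
def Rge (k : ℤ) : Submodule ℤ R := ⨆ n ≥ k, 𝒜 n

theorem Rle_mul_Rle (a b : ℤ) : Rle 𝒜 a * Rle 𝒜 b ≤ Rle 𝒜 (a + b) := by
  rw [Rle, Rle, Submodule.iSup_mul]
  refine iSup_le fun n => ?_
  rw [Submodule.iSup_mul]
  refine iSup_le fun hn => ?_
  rw [Submodule.mul_iSup]
  refine iSup_le fun m => ?_
  rw [Submodule.mul_iSup]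
  refine iSup_le fun hm => ?_
  refine le_trans (Submodule.mul_le.2 fun x hx y hy => SetLike.mul_mem_graded hx hy) ?_
  exact le_iSup₂_of_le (n + m) (add_le_add hn hm) le_rfl

theorem Rge_mul_Rge (a b : ℤ) : Rge 𝒜 a * Rge 𝒜 b ≤ Rge 𝒜 (a + b) := by
  rw [Rge, Rge, Submodule.iSup_mul]
  refine iSup_le fun n => ?_
  rw [Submodule.iSup_mul]
  refine iSup_le fun hn => ?_
  rw [Submodule.mul_iSup]
  refine iSup_le fun m => ?_
  rw [Submodule.mul_iSup]
  refine iSup_le fun hm => ?_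
  refine le_trans (Submodule.mul_le.2 fun x hx y hy => SetLike.mul_mem_graded hx hy) ?_
  exact le_iSup₂_of_le (n + m) (add_le_add hn hm) le_rfl

/-- The subring `R_{≤0}` of `R`. -/
def RleSubring : Subring R where
  carrier := Rle 𝒜 0
  zero_mem' := zero_mem _
  add_mem' := fun h1 h2 => add_mem h1 h2
  neg_mem' := fun h => neg_mem h
  one_mem' :=
    Submodule.mem_iSup_of_mem 0 (Submodule.mem_iSup_of_mem le_rfl (SetLike.one_mem_graded 𝒜))
  mul_mem' := fun h1 h2 => by
    simpa using Rle_mul_Rle 𝒜 0 0 (Submodule.mul_mem_mul h1 h2)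

/-- The subring `R_{≥0}` of `R`. -/
def RgeSubring : Subring R where
  carrier := Rge 𝒜 0
  zero_mem' := zero_mem _
  add_mem' := fun h1 h2 => add_mem h1 h2
  neg_mem' := fun h => neg_mem h
  one_mem' :=
    Submodule.mem_iSup_of_mem 0 (Submodule.mem_iSup_of_mem le_rfl (SetLike.one_mem_graded 𝒜))
  mul_mem' := fun h1 h2 => by
    simpa using Rge_mul_Rge 𝒜 0 0 (Submodule.mul_mem_mul h1 h2)

/-!
`R` is the directed union of the `R_{≥0}`-submodules `R_{≥k}`, so by the equational criterion
it suffices that each `R_{≥k}` is flat; in fact it is projective. Strong grading writes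
`1 = ∑ u_j v_j` with `u_j ∈ 𝒜 (-k)` and `v_j ∈ 𝒜 k`, and then `m ↦ (u_j m)_j` and
`c ↦ ∑ c_j v_j` exhibit `R_{≥k}` as a direct summand of a free `R_{≥0}`-module.
The same argument works for `R_{≤k}` over `R_{≤0}`.
-/

theorem Submodule.exists_fin_sum_mul_eq_of_mem_mul {S A : Type*} [CommSemiring S] [Semiring A]
    [Algebra S A] {p q : Submodule S A} {r : A} (hr : r ∈ p * q) :
    ∃ (n : ℕ) (u v : Fin n → A), (∀ j, u j ∈ p) ∧ (∀ j, v j ∈ q) ∧ ∑ j, u j * v j = r := by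
  refine Submodule.mul_induction_on hr
    (fun x hx y hy => ⟨1, fun _ => x, fun _ => y, fun _ => hx, fun _ => hy, by simp⟩) ?_
  rintro _ _ ⟨n₁, u₁, v₁, hu₁, hv₁, rfl⟩ ⟨n₂, u₂, v₂, hu₂, hv₂, rfl⟩
  refine ⟨n₁ + n₂, Fin.append u₁ u₂, Fin.append v₁ v₂, Fin.addCases ?_ ?_, Fin.addCases ?_ ?_,
    by simp [Fin.sum_univ_add]⟩ <;> simpa

theorem Module.Flat.of_directed_of_forall_exists_mem {S M ι : Type*} [CommRing S] [AddCommGroup M]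
    [Module S M] (N : ι → Submodule S M) (hdir : Directed (· ≤ ·) N)
    (hcover : ∀ x, ∃ i, x ∈ N i) (hflat : ∀ i, Module.Flat S (N i)) : Module.Flat S M := by
  obtain ⟨i₀, -⟩ := hcover 0
  have : Nonempty ι := ⟨i₀⟩
  rw [Module.Flat.iff_forall_isTrivialRelation]
  intro l f x hfx
  choose idx hidx using fun j => hcover (x j)
  obtain ⟨i, hi⟩ := hdir.finite_le idx
  let x' : Fin l → N i := fun j => ⟨x j, hi j (hidx j)⟩
  obtain ⟨κ, a, y, hxy, hay⟩ := Module.Flat.iff_forall_isTrivialRelation.mp (hflat i)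
    (x := x') (Subtype.ext (by simpa [x'] using hfx))
  exact ⟨κ, a, fun k => y k, fun j => by simpa [x'] using congrArg Subtype.val (hxy j), hay⟩

theorem Subring.projective_submodule_of_sum_mul_eq_one {A ι : Type*} [CommRing A] [Fintype ι]
    {S : Subring A} {M : Submodule S A} (u v : ι → A) (hu : ∀ j, ∀ m ∈ M, u j * m ∈ S)
    (hv : ∀ j, v j ∈ M) (huv : ∑ j, u j * v j = 1) : Module.Projective S M := by
  let i : M →ₗ[S] ι → S :=
    { toFun m j := ⟨u j * m, hu j m m.2⟩
      map_add' m m' := by ext; simp [mul_add]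
      map_smul' s m := by ext; simp [Subring.smul_def, mul_left_comm] }
  let r : (ι → S) →ₗ[S] M := Fintype.linearCombination S fun j => ⟨v j, hv j⟩
  refine .of_split i r (LinearMap.ext fun m => Subtype.ext ?_)
  simp [r, i, Fintype.linearCombination_apply, Subring.smul_def, mul_right_comm _ (m : A),
    ← Finset.sum_mul, huv]

omit [GradedRing 𝒜] in
theorem le_Rge {k n : ℤ} (h : k ≤ n) : 𝒜 n ≤ Rge 𝒜 k :=
  le_iSup₂_of_le n h le_rfl

omit [GradedRing 𝒜] in
theorem le_Rle {k n : ℤ} (h : n ≤ k) : 𝒜 n ≤ Rle 𝒜 k :=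
  le_iSup₂_of_le n h le_rfl

omit [GradedRing 𝒜] in
theorem Rge_antitone : Antitone (Rge 𝒜) :=
  fun _ _ h => iSup₂_le fun _ hn => le_Rge 𝒜 (h.trans hn)

omit [GradedRing 𝒜] in
theorem Rle_monotone : Monotone (Rle 𝒜) :=
  fun _ _ h => iSup₂_le fun _ hn => le_Rle 𝒜 (hn.trans h)

theorem mul_mem_Rge {a b : ℤ} {x y : R} (hx : x ∈ Rge 𝒜 a) (hy : y ∈ Rge 𝒜 b) :
    x * y ∈ Rge 𝒜 (a + b) :=
  Rge_mul_Rge 𝒜 a b (Submodule.mul_mem_mul hx hy)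

theorem mul_mem_Rle {a b : ℤ} {x y : R} (hx : x ∈ Rle 𝒜 a) (hy : y ∈ Rle 𝒜 b) :
    x * y ∈ Rle 𝒜 (a + b) :=
  Rle_mul_Rle 𝒜 a b (Submodule.mul_mem_mul hx hy)

theorem exists_mem_Rge (x : R) : ∃ k, x ∈ Rge 𝒜 k := by
  induction x using DirectSum.Decomposition.inductionOn 𝒜 with
  | zero => exact ⟨0, zero_mem _⟩
  | homogeneous m => exact ⟨_, le_Rge 𝒜 le_rfl m.2⟩
  | add x y hx hy =>
    obtain ⟨k, hk⟩ := hx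
    obtain ⟨l, hl⟩ := hy
    exact ⟨min k l, add_mem (Rge_antitone 𝒜 (min_le_left k l) hk)
      (Rge_antitone 𝒜 (min_le_right k l) hl)⟩

theorem exists_mem_Rle (x : R) : ∃ k, x ∈ Rle 𝒜 k := by
  induction x using DirectSum.Decomposition.inductionOn 𝒜 with
  | zero => exact ⟨0, zero_mem _⟩
  | homogeneous m => exact ⟨_, le_Rle 𝒜 le_rfl m.2⟩
  | add x y hx hy =>
    obtain ⟨k, hk⟩ := hx
    obtain ⟨l, hl⟩ := hy
    exact ⟨max k l, add_mem (Rle_monotone 𝒜 (le_max_left k l) hk)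
      (Rle_monotone 𝒜 (le_max_right k l) hl)⟩

def RgeSubmodule (k : ℤ) : Submodule (RgeSubring 𝒜) R where
  carrier := Rge 𝒜 k
  add_mem' := add_mem
  zero_mem' := zero_mem _
  smul_mem' s _ hx := by simpa [Subring.smul_def] using mul_mem_Rge 𝒜 s.2 hx

def RleSubmodule (k : ℤ) : Submodule (RleSubring 𝒜) R where
  carrier := Rle 𝒜 k
  add_mem' := add_mem
  zero_mem' := zero_mem _
  smul_mem' s _ hx := by simpa [Subring.smul_def] using mul_mem_Rle 𝒜 s.2 hx

theorem RgeSubmodule_antitone : Antitone (RgeSubmodule 𝒜) :=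
  Rge_antitone 𝒜

theorem RleSubmodule_monotone : Monotone (RleSubmodule 𝒜) :=
  Rle_monotone 𝒜

theorem exists_sum_mul_eq_one_of_isStronglyGraded (h : IsStronglyGraded 𝒜) (k : ℤ) :
    ∃ (n : ℕ) (u v : Fin n → R), (∀ j, u j ∈ 𝒜 (-k)) ∧ (∀ j, v j ∈ 𝒜 k) ∧ ∑ j, u j * v j = 1 :=
  Submodule.exists_fin_sum_mul_eq_of_mem_mul <| by
    rw [h, neg_add_cancel]
    exact SetLike.one_mem_graded 𝒜

theorem projective_RgeSubmodule (h : IsStronglyGraded 𝒜) (k : ℤ) :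
    Module.Projective (RgeSubring 𝒜) (RgeSubmodule 𝒜 k) := by
  obtain ⟨n, u, v, hu, hv, huv⟩ := exists_sum_mul_eq_one_of_isStronglyGraded 𝒜 h k
  refine Subring.projective_submodule_of_sum_mul_eq_one u v (fun j m hm => ?_)
    (fun j => le_Rge 𝒜 le_rfl (hv j)) huv
  have := mul_mem_Rge 𝒜 (le_Rge 𝒜 le_rfl (hu j)) hm
  rwa [neg_add_cancel] at this

theorem projective_RleSubmodule (h : IsStronglyGraded 𝒜) (k : ℤ) :
    Module.Projective (RleSubring 𝒜) (RleSubmodule 𝒜 k) := by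
  obtain ⟨n, u, v, hu, hv, huv⟩ := exists_sum_mul_eq_one_of_isStronglyGraded 𝒜 h k
  refine Subring.projective_submodule_of_sum_mul_eq_one u v (fun j m hm => ?_)
    (fun j => le_Rle 𝒜 le_rfl (hv j)) huv
  have := mul_mem_Rle 𝒜 (le_Rle 𝒜 le_rfl (hu j)) hm
  rwa [neg_add_cancel] at this

/-- If the commutative ring `R` is strongly ℤ-graded then `R` is flat as a
module over the subring `R_{≥0}`, and also as a module over the subring `R_{≤0}`. -/
theorem flat_over_Rge_and_Rle (h : IsStronglyGraded 𝒜) :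
    Module.Flat (RgeSubring 𝒜) R ∧ Module.Flat (RleSubring 𝒜) R := by
  have := projective_RgeSubmodule 𝒜 h
  have := projective_RleSubmodule 𝒜 h
  exact ⟨.of_directed_of_forall_exists_mem _ (RgeSubmodule_antitone 𝒜).directed_le
      (exists_mem_Rge 𝒜) fun _ => inferInstance,
    .of_directed_of_forall_exists_mem _ (RleSubmodule_monotone 𝒜).directed_le
      (exists_mem_Rle 𝒜) fun _ => inferInstance⟩
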